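/- Let D, B be square matrices over ℝ with B skew-symmetric and D symmetric, and suppose D(t) solves the Lax equation D' = [B(t), D(t)] where B(t) is continuous. Then the eigenvalues (spectrum) of D(t) are constant in t; more precisely, D(t) = U(t) D(0) U(t)* for the unitary U solving U' = B U, U(0) = I. -/

import Mathlib

/-!
Since `B` is skew-symmetric, `d/dt (Uᵀ X U) = Uᵀ (Bᵀ X + X' + X B) U = Uᵀ (X' - [B, X]) U`, so `Uᵀ X U`
is constant along every solution `X` of the Lax equation `X' = [B, X]`. Applied to the constant
solution `X = 1` this shows that `U` stays orthogonal, and applied to `X = D` it gives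
`Uᵀ D U = D 0`; conjugation by an orthogonal matrix preserves the spectrum.
-/

open Matrix

attribute [local instance] Matrix.linftyOpNormedAddCommGroup Matrix.linftyOpNormedRing Matrix.linftyOpNormedAlgebra

section
variable {ι : Type*} [Fintype ι] [DecidableEq ι]

theorem HasDerivAt.matrix_transpose {U : ℝ → Matrix ι ι ℝ} {U' : Matrix ι ι ℝ} {t : ℝ}
    (hU : HasDerivAt U U' t) : HasDerivAt (fun s => (U s)ᵀ) U'ᵀ t :=
  (transposeLinearEquiv ι ι ℝ ℝ).toLinearMap.toContinuousLinearMap.hasFDerivAt.comp_hasDerivAt t hU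

theorem transpose_mul_mul_eq_of_hasDerivAt_lax {X B U : ℝ → Matrix ι ι ℝ}
    (hBskew : ∀ t, (B t)ᵀ = -B t)
    (hX : ∀ t, HasDerivAt X (B t * X t - X t * B t) t)
    (hU : ∀ t, HasDerivAt U (B t * U t) t) (t : ℝ) :
    (U t)ᵀ * X t * U t = (U 0)ᵀ * X 0 * U 0 := by
  have hderiv : ∀ s, HasDerivAt (fun r => (U r)ᵀ * X r * U r) 0 s := fun s => by
    refine ((((hU s).matrix_transpose).mul (hX s)).mul (hU s)).congr_deriv ?_
    rw [transpose_mul, hBskew s, Pi.mul_apply]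
    noncomm_ring
  exact is_const_of_deriv_eq_zero (fun s => (hderiv s).differentiableAt)
    (fun s => (hderiv s).deriv) t 0

theorem mem_orthogonalGroup_of_hasDerivAt {B U : ℝ → Matrix ι ι ℝ}
    (hBskew : ∀ t, (B t)ᵀ = -B t) (hU : ∀ t, HasDerivAt U (B t * U t) t) (hU0 : U 0 = 1)
    (t : ℝ) : U t ∈ orthogonalGroup ι ℝ := by
  have hconst : ∀ s, HasDerivAt (fun _ => (1 : Matrix ι ι ℝ)) (B s * 1 - 1 * B s) s := fun s =>
    (hasDerivAt_const s _).congr_deriv (by simp)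
  rw [mem_orthogonalGroup_iff']
  simpa [hU0] using transpose_mul_mul_eq_of_hasDerivAt_lax hBskew hconst hU t

theorem eq_mul_mul_transpose_of_hasDerivAt_lax {X B U : ℝ → Matrix ι ι ℝ}
    (hBskew : ∀ t, (B t)ᵀ = -B t)
    (hX : ∀ t, HasDerivAt X (B t * X t - X t * B t) t)
    (hU : ∀ t, HasDerivAt U (B t * U t) t) (hU0 : U 0 = 1) (t : ℝ) :
    X t = U t * X 0 * (U t)ᵀ := by
  have horth := (mem_orthogonalGroup_iff ι ℝ).mp (mem_orthogonalGroup_of_hasDerivAt hBskew hU hU0 t)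
  have hconj := transpose_mul_mul_eq_of_hasDerivAt_lax hBskew hX hU t
  rw [hU0, transpose_one, Matrix.one_mul, Matrix.mul_one] at hconj
  calc X t = (U t * (U t)ᵀ) * X t * (U t * (U t)ᵀ) := by rw [horth, Matrix.one_mul, Matrix.mul_one]
    _ = U t * ((U t)ᵀ * X t * U t) * (U t)ᵀ := by noncomm_ring
    _ = U t * X 0 * (U t)ᵀ := by rw [hconj]

end

theorem stmt0_general {n : ℕ} (D B U : ℝ → Matrix (Fin n) (Fin n) ℝ)
    (hBskew : ∀ t, (B t)ᵀ = -(B t))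
    (hD : ∀ t, HasDerivAt D (B t * D t - D t * B t) t)
    (hU : ∀ t, HasDerivAt U (B t * U t) t)
    (hU0 : U 0 = 1) :
    (∀ t, D t = U t * D 0 * (U t)ᵀ) ∧
    (∀ t, spectrum ℝ (D t) = spectrum ℝ (D 0)) := by
  have hconj := eq_mul_mul_transpose_of_hasDerivAt_lax hBskew hD hU hU0
  refine ⟨hconj, fun t => ?_⟩
  let V : orthogonalGroup (Fin n) ℝ := ⟨U t, mem_orthogonalGroup_of_hasDerivAt hBskew hU hU0 t⟩
  rw [hconj t]
  exact Unitary.spectrum_star_right_conjugate (U := V)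

/-- Lax isospectrality: if `D' = [B,D]` with `B` skew-symmetric and `D` symmetric,
then `D(t) = U(t) D(0) U(t)ᵀ` for the unitary `U` solving `U' = B U`, `U 0 = 1`,
and the spectrum of `D(t)` is constant. -/
theorem stmt0 {n : ℕ} (D B U : ℝ → Matrix (Fin n) (Fin n) ℝ)
    (hBskew : ∀ t, (B t)ᵀ = -(B t))
    (hDsym : ∀ t, (D t)ᵀ = D t)
    (hBcont : Continuous B)
    (hD : ∀ t, HasDerivAt D (B t * D t - D t * B t) t)
    (hU : ∀ t, HasDerivAt U (B t * U t) t)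
    (hU0 : U 0 = 1) :
    (∀ t, D t = U t * D 0 * (U t)ᵀ) ∧
    (∀ t, spectrum ℝ (D t) = spectrum ℝ (D 0)) :=
  stmt0_general D B U hBskew hD hU hU0
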